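/- Let a, b ≥ 0, T > 0 and suppose a continuous nonnegative function φ on (0, 2T) satisfies φ(t) ≤ a(1 + t^{−1/2}) + b ∫_0^t (1 + (t−s)^{−1/2}) φ(s) ds for all t ∈ (0,T), where b(T + 2√T) ≤ 1/2. Then sup_{t∈(0,T)} ∫_0^t (1+(t−s)^{−1/2}) φ(s) ds ≤ 2a(π + 4√T + T), and consequently φ(t) ≤ a(1 + t^{−1/2}) + 2ab(π + 4√T + T) for all t ∈ (0,T). -/

import Mathlib

/-!
Write `F t = ∫₀ᵗ (1 + (t - s)^{-1/2}) φ s ds`. Everything rests on the kernel identities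
`∫ᵤᵗ (1 + (t - s)^{-1/2}) ds = (t - u) + 2√(t - u)` and
`∫ᵤᵗ (1 + (t - s)^{-1/2}) (1 + (s - u)^{-1/2}) ds = (t - u) + 4√(t - u) + π`,
the `π` being the Beta integral `B(1/2, 1/2)`.

Inserting the hypothesis on `φ` into `F` once and exchanging the order of integration bounds `F`
on `(0, T)` by a multiple of `∫₀ᵀ φ`, so `M = sup F` is finite. Inserting it again gives
`M ≤ a (π + 4√T + T) + b (T + 2√T) M`, and `b (T + 2√T) ≤ 1/2` yields `M ≤ 2a (π + 4√T + T)`.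
-/

open MeasureTheory Real Set
open scoped ENNReal

lemma Complex.betaIntegral_one_half_one_half : Complex.betaIntegral (1 / 2) (1 / 2) = π := by
  have h := Complex.Gamma_mul_Gamma_eq_betaIntegral (s := 1 / 2) (t := 1 / 2)
    (by norm_num) (by norm_num)
  rw [show (1 / 2 + 1 / 2 : ℂ) = 1 by norm_num, Complex.Gamma_one, one_mul,
    Complex.Gamma_one_half_eq, ← Complex.cpow_add _ _ (Complex.ofReal_ne_zero.2 pi_ne_zero)] at h
  norm_num at h
  exact h.symm

namespace SingularGronwall

/-- For `x < 0`, `Real.rpow` gives `x ^ y = exp (log x * y) * cos (y * π)`, which vanishes at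
`y = -1/2`. -/
lemma rpow_neg_one_half_nonneg (x : ℝ) : 0 ≤ x ^ (-(1 / 2) : ℝ) := by
  rcases lt_trichotomy x 0 with h | rfl | h
  · rw [rpow_def_of_neg h, show -(1 / 2) * π = -(π / 2) by ring, cos_neg, cos_pi_div_two,
      mul_zero]
  · rw [zero_rpow (by norm_num)]
  · exact (rpow_pos_of_pos h _).le

noncomputable def kernel (x : ℝ) : ℝ := 1 + x ^ (-(1 / 2) : ℝ)

lemma one_le_kernel (x : ℝ) : 1 ≤ kernel x :=
  le_add_of_nonneg_right (rpow_neg_one_half_nonneg x)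

lemma kernel_nonneg (x : ℝ) : 0 ≤ kernel x :=
  zero_le_one.trans (one_le_kernel x)

@[fun_prop]
lemma measurable_kernel : Measurable kernel :=
  measurable_const.add (measurable_id.pow_const _)

lemma integral_rpow_neg_one_half (c : ℝ) : ∫ x in (0 : ℝ)..c, x ^ (-(1 / 2) : ℝ) = 2 * √c := by
  rw [integral_rpow (Or.inl (by norm_num)), zero_rpow (by norm_num), sqrt_eq_rpow]
  norm_num
  ring

lemma intervalIntegrable_rpow_neg_one_half (c : ℝ) :
    IntervalIntegrable (fun x : ℝ => x ^ (-(1 / 2) : ℝ)) volume 0 c :=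
  intervalIntegral.intervalIntegrable_rpow' (by norm_num)

lemma integral_rpow_neg_one_half_mul_sub_rpow {c : ℝ} (hc : 0 < c) :
    ∫ x in (0 : ℝ)..c, x ^ (-(1 / 2) : ℝ) * (c - x) ^ (-(1 / 2) : ℝ) = π := by
  have hcpow : EqOn (fun x : ℝ => ((x ^ (-(1 / 2) : ℝ) * (c - x) ^ (-(1 / 2) : ℝ) : ℝ) : ℂ))
      (fun x : ℝ => (x : ℂ) ^ ((1 / 2 : ℂ) - 1) * ((c : ℂ) - x) ^ ((1 / 2 : ℂ) - 1))
      (uIcc 0 c) := by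
    intro x hx
    rw [uIcc_of_le hc.le] at hx
    have e1 := Complex.ofReal_cpow hx.1 (-(1 / 2))
    have e2 := Complex.ofReal_cpow (sub_nonneg.2 hx.2) (-(1 / 2))
    push_cast at e1 e2 ⊢
    rw [e1, e2]
    norm_num
  have hscaled := Complex.betaIntegral_scaled (1 / 2) (1 / 2) hc
  rw [show (1 / 2 + 1 / 2 - 1 : ℂ) = 0 by norm_num, Complex.cpow_zero, one_mul,
    Complex.betaIntegral_one_half_one_half, ← intervalIntegral.integral_congr hcpow,
    intervalIntegral.integral_ofReal] at hscaled
  exact_mod_cast hscaled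

section KernelIntegrals

variable {u t : ℝ}

lemma integral_Ioo_eq_intervalIntegral {f : ℝ → ℝ} (h : u ≤ t) :
    ∫ s in Ioo u t, f s = ∫ s in u..t, f s := by
  rw [intervalIntegral.integral_of_le h, integral_Ioc_eq_integral_Ioo]

lemma integrableOn_sub_rpow_neg_one_half (h : u ≤ t) :
    IntegrableOn (fun s => (t - s) ^ (-(1 / 2) : ℝ)) (Ioo u t) := by
  have := ((intervalIntegrable_rpow_neg_one_half (t - u)).comp_sub_left t).symm
  rw [sub_sub_cancel, sub_zero] at this
  exact (intervalIntegrable_iff_integrableOn_Ioo_of_le h).1 this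

lemma integrableOn_rpow_neg_one_half_sub (h : u ≤ t) :
    IntegrableOn (fun s => (s - u) ^ (-(1 / 2) : ℝ)) (Ioo u t) := by
  have := (intervalIntegrable_rpow_neg_one_half (t - u)).comp_sub_right u
  rw [zero_add, sub_add_cancel] at this
  exact (intervalIntegrable_iff_integrableOn_Ioo_of_le h).1 this

lemma integral_sub_rpow_neg_one_half (h : u ≤ t) :
    ∫ s in Ioo u t, (t - s) ^ (-(1 / 2) : ℝ) = 2 * √(t - u) := by
  rw [integral_Ioo_eq_intervalIntegral h, intervalIntegral.integral_comp_sub_left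
    (fun x => x ^ (-(1 / 2) : ℝ)), sub_self, integral_rpow_neg_one_half]

lemma integral_rpow_neg_one_half_sub (h : u ≤ t) :
    ∫ s in Ioo u t, (s - u) ^ (-(1 / 2) : ℝ) = 2 * √(t - u) := by
  rw [integral_Ioo_eq_intervalIntegral h, intervalIntegral.integral_comp_sub_right
    (fun x => x ^ (-(1 / 2) : ℝ)), sub_self, integral_rpow_neg_one_half]

lemma integral_sub_rpow_neg_one_half_mul_rpow_neg_one_half_sub (h : u < t) :
    ∫ s in Ioo u t, (t - s) ^ (-(1 / 2) : ℝ) * (s - u) ^ (-(1 / 2) : ℝ) = π := by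
  have hshift := intervalIntegral.integral_comp_sub_right (a := u) (b := t)
    (fun x => x ^ (-(1 / 2) : ℝ) * ((t - u) - x) ^ (-(1 / 2) : ℝ)) u
  rw [sub_self, integral_rpow_neg_one_half_mul_sub_rpow (sub_pos.2 h)] at hshift
  rw [integral_Ioo_eq_intervalIntegral h.le, ← hshift]
  refine intervalIntegral.integral_congr fun s _ => ?_
  simp only [sub_sub_sub_cancel_right, mul_comm]

/-- Near each endpoint one factor is at most `((t - u) / 2) ^ (-1/2)`, so the product is dominated
by a multiple of the sum of the two factors. -/
lemma integrableOn_sub_rpow_neg_one_half_mul_rpow_neg_one_half_sub (h : u < t) :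
    IntegrableOn (fun s => (t - s) ^ (-(1 / 2) : ℝ) * (s - u) ^ (-(1 / 2) : ℝ)) (Ioo u t) := by
  set c := ((t - u) / 2) ^ (-(1 / 2) : ℝ)
  have hc : 0 ≤ c := rpow_neg_one_half_nonneg _
  refine Integrable.mono' (((integrableOn_rpow_neg_one_half_sub h.le).const_mul c).add
    ((integrableOn_sub_rpow_neg_one_half h.le).const_mul c)) (by fun_prop) ?_
  filter_upwards [ae_restrict_mem measurableSet_Ioo] with s ⟨hus, hst⟩
  have h₁ := rpow_neg_one_half_nonneg (t - s)
  have h₂ := rpow_neg_one_half_nonneg (s - u)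
  rw [norm_of_nonneg (mul_nonneg h₁ h₂), Pi.add_apply]
  rcases le_or_gt s ((u + t) / 2) with hs | hs
  · have : (t - s) ^ (-(1 / 2) : ℝ) ≤ c :=
      rpow_le_rpow_of_nonpos (by linarith) (by linarith) (by norm_num)
    nlinarith [mul_nonneg hc h₁]
  · have : (s - u) ^ (-(1 / 2) : ℝ) ≤ c :=
      rpow_le_rpow_of_nonpos (by linarith) (by linarith) (by norm_num)
    nlinarith [mul_nonneg hc h₂]

lemma integrableOn_kernel_sub (h : u ≤ t) :
    IntegrableOn (fun s => kernel (t - s)) (Ioo u t) :=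
  Integrable.fun_add (integrableOn_const measure_Ioo_lt_top.ne)
    (integrableOn_sub_rpow_neg_one_half h)

lemma integral_kernel_sub (h : u ≤ t) :
    ∫ s in Ioo u t, kernel (t - s) = (t - u) + 2 * √(t - u) := by
  have h₁ : IntegrableOn (fun _ => (1 : ℝ)) (Ioo u t) := integrableOn_const measure_Ioo_lt_top.ne
  simp only [kernel]
  rw [integral_add h₁ (integrableOn_sub_rpow_neg_one_half h), integral_sub_rpow_neg_one_half h]
  simp [h]

lemma kernel_sub_mul_kernel_sub (s : ℝ) : kernel (t - s) * kernel (s - u) =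
    1 + (s - u) ^ (-(1 / 2) : ℝ) +
      ((t - s) ^ (-(1 / 2) : ℝ) + (t - s) ^ (-(1 / 2) : ℝ) * (s - u) ^ (-(1 / 2) : ℝ)) := by
  simp only [kernel]
  ring

lemma integrableOn_kernel_mul_kernel_and_integral_eq (h : u < t) :
    IntegrableOn (fun s => kernel (t - s) * kernel (s - u)) (Ioo u t) ∧
      ∫ s in Ioo u t, kernel (t - s) * kernel (s - u) = (t - u) + 4 * √(t - u) + π := by
  have h₁ : IntegrableOn (fun _ => (1 : ℝ)) (Ioo u t) := integrableOn_const measure_Ioo_lt_top.ne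
  have hl := integrableOn_rpow_neg_one_half_sub h.le
  have hr := integrableOn_sub_rpow_neg_one_half h.le
  have hlr := integrableOn_sub_rpow_neg_one_half_mul_rpow_neg_one_half_sub h
  simp only [kernel_sub_mul_kernel_sub]
  refine ⟨Integrable.fun_add (Integrable.fun_add h₁ hl) (Integrable.fun_add hr hlr), ?_⟩
  rw [integral_add (Integrable.fun_add h₁ hl) (Integrable.fun_add hr hlr), integral_add h₁ hl,
    integral_add hr hlr, integral_rpow_neg_one_half_sub h.le, integral_sub_rpow_neg_one_half h.le,
    integral_sub_rpow_neg_one_half_mul_rpow_neg_one_half_sub h]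
  simp [h.le]
  ring

lemma lintegral_kernel_mul_kernel (h : u < t) :
    ∫⁻ s in Ioo u t, ENNReal.ofReal (kernel (t - s)) * ENNReal.ofReal (kernel (s - u)) =
      ENNReal.ofReal ((t - u) + 4 * √(t - u) + π) := by
  simp_rw [← ENNReal.ofReal_mul (kernel_nonneg _)]
  obtain ⟨hint, heq⟩ := integrableOn_kernel_mul_kernel_and_integral_eq h
  rw [← ofReal_integral_eq_lintegral_ofReal hint
    (ae_of_all _ fun s => mul_nonneg (kernel_nonneg _) (kernel_nonneg _)), heq]

end KernelIntegrals

lemma add_four_mul_sqrt_add_pi_le {x y : ℝ} (hxy : x ≤ y) : x + 4 * √x + π ≤ π + 4 * √y + y := by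
  linarith [sqrt_le_sqrt hxy]

/-- With `v` fixed the inner integral over `s ∈ (v, r)` is `(r - v) + 4 √(r - v) + π`, by the
kernel computation above, so Tonelli turns the iterated kernel into this bound. -/
lemma lintegral_kernel_mul_lintegral_kernel_le {r : ℝ} {g : ℝ → ℝ≥0∞}
    (hg : AEMeasurable g (volume.restrict (Ioo 0 r))) :
    ∫⁻ s in Ioo 0 r, ENNReal.ofReal (kernel (r - s)) *
        ∫⁻ v in Ioo 0 s, ENNReal.ofReal (kernel (s - v)) * g v ≤
      ENNReal.ofReal (π + 4 * √r + r) * ∫⁻ v in Ioo 0 r, g v := by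
  set κ : ℝ → ℝ≥0∞ := fun x => ENNReal.ofReal (kernel x)
  set G : ℝ → ℝ → ℝ≥0∞ := fun s v =>
    {p : ℝ × ℝ | p.2 < p.1}.indicator (fun p => κ (r - p.1) * κ (p.1 - p.2) * g p.2) (s, v)
  have hG : AEMeasurable (Function.uncurry G)
      ((volume.restrict (Ioo 0 r)).prod (volume.restrict (Ioo 0 r))) :=
    ((by fun_prop : Measurable fun p : ℝ × ℝ => κ (r - p.1) * κ (p.1 - p.2)).aemeasurable.mul
      hg.comp_snd).indicator (measurableSet_lt measurable_snd measurable_fst)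
  calc _ = ∫⁻ s in Ioo 0 r, ∫⁻ v in Ioo 0 r, G s v := by
        refine setLIntegral_congr_fun measurableSet_Ioo fun s hs => ?_
        have hGs : ∀ v, G s v = (Iio s).indicator (fun v => κ (r - s) * (κ (s - v) * g v)) v :=
          fun v => by simp only [G, indicator_apply, mem_ofPred_eq, mem_Iio, mul_assoc]
        rw [← lintegral_const_mul' _ _ ENNReal.ofReal_ne_top, lintegral_congr hGs,
          setLIntegral_indicator measurableSet_Iio, Iio_inter_Ioo, min_eq_left hs.2.le]
    _ = ∫⁻ v in Ioo 0 r, ∫⁻ s in Ioo 0 r, G s v := lintegral_lintegral_swap hG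
    _ ≤ ∫⁻ v in Ioo 0 r, ENNReal.ofReal (π + 4 * √r + r) * g v := by
        refine setLIntegral_mono' measurableSet_Ioo fun v hv => ?_
        have hGv : ∀ s, G s v = (Ioi v).indicator (fun s => κ (r - s) * κ (s - v)) s * g v :=
          fun s => by by_cases hvs : v < s <;> simp [G, hvs]
        have hIoo : Ioi v ∩ Ioo 0 r = Ioo v r := by
          ext x
          simp only [mem_inter_iff, mem_Ioi, mem_Ioo]
          exact ⟨fun h => ⟨h.1, h.2.2⟩, fun h => ⟨h.1, hv.1.trans h.1, h.2⟩⟩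
        have hmeas : Measurable fun s => κ (r - s) * κ (s - v) := by fun_prop
        rw [lintegral_congr hGv, lintegral_mul_const _ (hmeas.indicator measurableSet_Ioi),
          setLIntegral_indicator measurableSet_Ioi, hIoo, lintegral_kernel_mul_kernel hv.2]
        gcongr ENNReal.ofReal ?_ * _
        exact add_four_mul_sqrt_add_pi_le (by linarith [hv.1])
    _ = _ := lintegral_const_mul'' _ hg

noncomputable def kernelConv (φ : ℝ → ℝ) (t : ℝ) : ℝ := ∫ s in Ioo 0 t, kernel (t - s) * φ s

section KernelConv

variable {φ : ℝ → ℝ} {a b t T : ℝ}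

lemma kernelConv_nonneg (hφ : ∀ s ∈ Ioo 0 t, 0 ≤ φ s) : 0 ≤ kernelConv φ t :=
  setIntegral_nonneg measurableSet_Ioo fun s hs => mul_nonneg (kernel_nonneg _) (hφ s hs)

lemma ofReal_kernelConv (hφ : ∀ s ∈ Ioo 0 t, 0 ≤ φ s)
    (hint : IntegrableOn (fun s => kernel (t - s) * φ s) (Ioo 0 t)) :
    ENNReal.ofReal (kernelConv φ t) =
      ∫⁻ s in Ioo 0 t, ENNReal.ofReal (kernel (t - s)) * ENNReal.ofReal (φ s) := by
  rw [kernelConv, ofReal_integral_eq_lintegral_ofReal hint ((ae_restrict_iff' measurableSet_Ioo).2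
    (ae_of_all _ fun s hs => mul_nonneg (kernel_nonneg _) (hφ s hs)))]
  exact setLIntegral_congr_fun measurableSet_Ioo fun s _ => ENNReal.ofReal_mul (kernel_nonneg _)

lemma integrableOn_Ioo_of_integrableOn_kernel_mul (ht : t ∈ Ioo 0 T)
    (hcont : ContinuousOn φ (Ioc 0 T)) (hφ : ∀ s ∈ Ioo 0 t, 0 ≤ φ s)
    (hint : IntegrableOn (fun s => kernel (t - s) * φ s) (Ioo 0 t)) :
    IntegrableOn φ (Ioo 0 T) := by
  have hleft : IntegrableOn φ (Ioo 0 t) := by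
    refine hint.mono' ((hcont.mono (Ioo_subset_Ioc_self.trans
      (Ioc_subset_Ioc_right ht.2.le))).aestronglyMeasurable measurableSet_Ioo) ?_
    filter_upwards [ae_restrict_mem measurableSet_Ioo] with s hs
    rw [norm_of_nonneg (hφ s hs)]
    exact le_mul_of_one_le_left (hφ s hs) (one_le_kernel _)
  have hright : IntegrableOn φ (Icc t T) :=
    (hcont.mono fun s hs => ⟨ht.1.trans_le hs.1, hs.2⟩).integrableOn_Icc
  refine (hleft.union hright).mono_set fun s hs => ?_
  rcases lt_or_ge s t with h | h
  · exact Or.inl ⟨hs.1, h⟩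
  · exact Or.inr ⟨h, hs.2.le⟩

lemma ofReal_le_add_mul_lintegral_kernel {s : ℝ} (hφ : ∀ v ∈ Ioo 0 s, 0 ≤ φ v)
    (hint : IntegrableOn (fun v => kernel (s - v) * φ v) (Ioo 0 s))
    (hineq : φ s ≤ a * kernel s + b * kernelConv φ s) :
    ENNReal.ofReal (φ s) ≤ ENNReal.ofReal a * ENNReal.ofReal (kernel s) +
      ENNReal.ofReal b *
        ∫⁻ v in Ioo 0 s, ENNReal.ofReal (kernel (s - v)) * ENNReal.ofReal (φ v) := by
  rw [← ofReal_kernelConv hφ hint]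
  exact (ENNReal.ofReal_le_ofReal hineq).trans <| ENNReal.ofReal_add_le.trans <|
    add_le_add (ENNReal.ofReal_mul' (kernel_nonneg s)).le
      (ENNReal.ofReal_mul' (kernelConv_nonneg hφ)).le

lemma bddAbove_kernelConv (hφ : ∀ t ∈ Ioo 0 T, 0 ≤ φ t) (hφi : IntegrableOn φ (Ioo 0 T))
    (hint : ∀ t ∈ Ioo 0 T, IntegrableOn (fun s => kernel (t - s) * φ s) (Ioo 0 t))
    (hineq : ∀ t ∈ Ioo 0 T, φ t ≤ a * kernel t + b * kernelConv φ t) :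
    BddAbove (kernelConv φ '' Ioo 0 T) := by
  set B := ENNReal.ofReal a * ENNReal.ofReal (π + 4 * √T + T) + ENNReal.ofReal b *
      (ENNReal.ofReal (π + 4 * √T + T) * ∫⁻ v in Ioo 0 T, ENNReal.ofReal (φ v)) with hB_def
  have hB : B ≠ ∞ :=
    ENNReal.add_ne_top.2 ⟨ENNReal.mul_ne_top ENNReal.ofReal_ne_top ENNReal.ofReal_ne_top,
      ENNReal.mul_ne_top ENNReal.ofReal_ne_top
        (ENNReal.mul_ne_top ENNReal.ofReal_ne_top hφi.lintegral_lt_top.ne)⟩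
  refine ⟨B.toReal, ?_⟩
  rintro _ ⟨r, hr, rfl⟩
  have hsub : Ioo 0 r ⊆ Ioo 0 T := Ioo_subset_Ioo_right hr.2.le
  have hpt : ∀ s ∈ Ioo 0 r, ENNReal.ofReal (kernel (r - s)) * ENNReal.ofReal (φ s) ≤
      ENNReal.ofReal a * (ENNReal.ofReal (kernel (r - s)) * ENNReal.ofReal (kernel (s - 0))) +
      ENNReal.ofReal b * (ENNReal.ofReal (kernel (r - s)) * ∫⁻ v in Ioo 0 s,
        ENNReal.ofReal (kernel (s - v)) * ENNReal.ofReal (φ v)) := by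
    intro s hs
    have hsT := hsub hs
    calc _ ≤ ENNReal.ofReal (kernel (r - s)) * (ENNReal.ofReal a * ENNReal.ofReal (kernel s) +
          ENNReal.ofReal b * ∫⁻ v in Ioo 0 s,
            ENNReal.ofReal (kernel (s - v)) * ENNReal.ofReal (φ v)) := by
          gcongr
          exact ofReal_le_add_mul_lintegral_kernel
            (fun v hv => hφ v ⟨hv.1, hv.2.trans hsT.2⟩) (hint s hsT) (hineq s hsT)
      _ = _ := by rw [sub_zero]; ring
  rw [← ENNReal.ofReal_le_iff_le_toReal hB,
    ofReal_kernelConv (fun s hs => hφ s (hsub hs)) (hint r hr)]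
  refine (setLIntegral_mono' measurableSet_Ioo hpt).trans ?_
  rw [lintegral_add_left (by fun_prop), lintegral_const_mul' _ _ ENNReal.ofReal_ne_top,
    lintegral_const_mul' _ _ ENNReal.ofReal_ne_top, lintegral_kernel_mul_kernel hr.1, sub_zero,
    hB_def]
  gcongr ENNReal.ofReal a * ?_ + ENNReal.ofReal b * ?_
  · exact ENNReal.ofReal_le_ofReal (add_four_mul_sqrt_add_pi_le hr.2.le)
  · refine (lintegral_kernel_mul_lintegral_kernel_le
      (hφi.mono_set hsub).aemeasurable.ennreal_ofReal).trans ?_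
    gcongr <;> exact hr.2.le

lemma kernelConv_le_of_le_mul_kernel_add {r c : ℝ} (hr : 0 < r)
    (hint : IntegrableOn (fun s => kernel (r - s) * φ s) (Ioo 0 r))
    (hφ : ∀ s ∈ Ioo 0 r, φ s ≤ a * kernel s + c) :
    kernelConv φ r ≤ a * (r + 4 * √r + π) + c * (r + 2 * √r) := by
  obtain ⟨hKK, hKK_eq⟩ := integrableOn_kernel_mul_kernel_and_integral_eq (u := 0) hr
  have hK := integrableOn_kernel_sub (u := 0) hr.le
  have hbound := Integrable.fun_add (hKK.const_mul a) (hK.const_mul c)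
  calc kernelConv φ r
      ≤ ∫ s in Ioo 0 r, (a * (kernel (r - s) * kernel (s - 0)) + c * kernel (r - s)) := by
        refine setIntegral_mono_on hint hbound measurableSet_Ioo fun s hs => ?_
        rw [sub_zero]
        nlinarith [mul_le_mul_of_nonneg_left (hφ s hs) (kernel_nonneg (r - s))]
    _ = a * (r + 4 * √r + π) + c * (r + 2 * √r) := by
        rw [integral_add (hKK.const_mul a) (hK.const_mul c), integral_const_mul,
          integral_const_mul, hKK_eq, integral_kernel_sub hr.le, sub_zero]

lemma kernelConv_le_of_forall_kernelConv_le {r M : ℝ} (ha : 0 ≤ a) (hb : 0 ≤ b)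
    (hφ : ∀ t ∈ Ioo 0 T, 0 ≤ φ t)
    (hint : ∀ t ∈ Ioo 0 T, IntegrableOn (fun s => kernel (t - s) * φ s) (Ioo 0 t))
    (hineq : ∀ t ∈ Ioo 0 T, φ t ≤ a * kernel t + b * kernelConv φ t)
    (hM : ∀ t ∈ Ioo 0 T, kernelConv φ t ≤ M) (hr : r ∈ Ioo 0 T) :
    kernelConv φ r ≤ a * (π + 4 * √T + T) + b * (T + 2 * √T) * M := by
  have hsub : Ioo 0 r ⊆ Ioo 0 T := Ioo_subset_Ioo_right hr.2.le
  have hM₀ : 0 ≤ M := (kernelConv_nonneg fun s hs => hφ s (hsub hs)).trans (hM r hr)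
  have hconv := kernelConv_le_of_le_mul_kernel_add (c := b * M) hr.1 (hint r hr) fun s hs =>
    (hineq s (hsub hs)).trans (by gcongr; exact hM s (hsub hs))
  have hsqrt := sqrt_le_sqrt hr.2.le
  nlinarith [mul_le_mul_of_nonneg_left hsqrt ha, mul_le_mul_of_nonneg_left hr.2.le ha,
    mul_le_mul_of_nonneg_left hsqrt (mul_nonneg hb hM₀),
    mul_le_mul_of_nonneg_left hr.2.le (mul_nonneg hb hM₀)]

end KernelConv

lemma le_div_one_sub_of_forall_le_add_mul {ι : Type*} {S : Set ι} {F : ι → ℝ} {A θ : ℝ}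
    (hθ : θ < 1) (hbdd : BddAbove (F '' S))
    (hstep : ∀ M, (∀ s ∈ S, F s ≤ M) → ∀ r ∈ S, F r ≤ A + θ * M) {r : ι} (hr : r ∈ S) :
    F r ≤ A / (1 - θ) := by
  have hsup : ∀ s ∈ S, F s ≤ sSup (F '' S) := fun s hs => le_csSup hbdd (mem_image_of_mem F hs)
  have hM : sSup (F '' S) ≤ A + θ * sSup (F '' S) :=
    csSup_le ((nonempty_of_mem hr).image F) (forall_mem_image.2 (hstep _ hsup))
  rw [le_div_iff₀ (sub_pos.2 hθ)]
  nlinarith [hsup r hr]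

end SingularGronwall

open SingularGronwall

/-- singular Gronwall-type bootstrap. -/
theorem stmt18 (a b T : ℝ) (ha : 0 ≤ a) (hb : 0 ≤ b) (hT : 0 < T)
    (φ : ℝ → ℝ) (hφ_cont : ContinuousOn φ (Set.Ioo 0 (2 * T)))
    (hφ_nonneg : ∀ t ∈ Set.Ioo (0 : ℝ) (2 * T), 0 ≤ φ t)
    (hint : ∀ t ∈ Set.Ioo (0 : ℝ) T,
      IntegrableOn (fun s => (1 + (t - s) ^ (-(1 / 2) : ℝ)) * φ s) (Set.Ioo 0 t))
    (hineq : ∀ t ∈ Set.Ioo (0 : ℝ) T,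
      φ t ≤ a * (1 + t ^ (-(1 / 2) : ℝ)) +
        b * ∫ s in Set.Ioo (0 : ℝ) t, (1 + (t - s) ^ (-(1 / 2) : ℝ)) * φ s)
    (hsmall : b * (T + 2 * Real.sqrt T) ≤ 1 / 2) :
    (∀ t ∈ Set.Ioo (0 : ℝ) T,
      (∫ s in Set.Ioo (0 : ℝ) t, (1 + (t - s) ^ (-(1 / 2) : ℝ)) * φ s) ≤
        2 * a * (π + 4 * Real.sqrt T + T)) ∧
    (∀ t ∈ Set.Ioo (0 : ℝ) T,
      φ t ≤ a * (1 + t ^ (-(1 / 2) : ℝ)) + 2 * a * b * (π + 4 * Real.sqrt T + T)) := by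
  have h2T : T < 2 * T := by linarith
  have hφ : ∀ t ∈ Ioo 0 T, 0 ≤ φ t := fun t ht => hφ_nonneg t ⟨ht.1, ht.2.trans h2T⟩
  have hT2 : T / 2 ∈ Ioo 0 T := ⟨by linarith, by linarith⟩
  have hφi : IntegrableOn φ (Ioo 0 T) :=
    integrableOn_Ioo_of_integrableOn_kernel_mul hT2 (hφ_cont.mono (Ioc_subset_Ioo_right h2T))
      (fun s hs => hφ s ⟨hs.1, hs.2.trans hT2.2⟩) (hint _ hT2)
  have hconv : ∀ t ∈ Ioo 0 T, kernelConv φ t ≤ 2 * a * (π + 4 * √T + T) := fun t ht => by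
    refine (le_div_one_sub_of_forall_le_add_mul (by linarith)
      (bddAbove_kernelConv hφ hφi hint hineq) (fun M hM r hr =>
        kernelConv_le_of_forall_kernelConv_le ha hb hφ hint hineq hM hr) ht).trans ?_
    rw [div_le_iff₀ (by linarith)]
    nlinarith [mul_nonneg ha (by positivity : (0 : ℝ) ≤ π + 4 * √T + T)]
  refine ⟨hconv, fun t ht => (hineq t ht).trans (add_le_add_right ?_ _)⟩
  exact (mul_le_mul_of_nonneg_left (hconv t ht) hb).trans_eq (by ring)
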